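/- arXiv:1211.3429 — 6 statements merged into one kernel-verified Lean document; each statement's English description precedes it below -/
import Mathlib

section
/- Let E be a field, λ ∈ E, and suppose φ = λ·Id on E³ (minimal polynomial x − λ). Then E³ has no structure of an admissible filtered φ-module with Hodge type (0, r, s) for 0 < r < s: indeed, admissibility forces v(λ) = (r+s)/3 on one hand, and for the 1-dimensional filtration step L₁ (which is automatically φ-invariant) admissibility forces s ≤ v(λ), contradicting s > (r+s)/3. -/
private lemma vpow {E : Type*} [Field E] (v : E → ℚ)
    (hv : ∀ x y : E, x ≠ 0 → y ≠ 0 → v (x * y) = v x + v y)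
    (lam : E) (hlam : lam ≠ 0) : ∀ n : ℕ, 0 < n → v (lam ^ n) = n * v lam := by
  intro n hn
  induction n with
  | zero => omega
  | succ k ih =>
    rcases Nat.eq_zero_or_pos k with hk | hk
    · simp [hk]
    · rw [pow_succ, hv _ _ (pow_ne_zero _ hlam) hlam, ih hk]
      push_cast; ring

/-- if `φ = λ · Id` on `E³`, there is no admissible filtered
`φ`-module structure of Hodge type `(0, r, s)` with `0 < r < s`.  Here `v` is a
`p`-adic-style valuation on `E` (additive on products of nonzero elements), the
Newton number of a `φ`-stable subspace `D'` is `v (det (φ|_{D'})) = v (λ ^ dim D')`,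
and the Hodge number of `D'` is `r · dim (D' ⊓ L₂) + (s - r) · dim (D' ⊓ L₁)`,
the sum of the jumps of the induced filtration. -/
theorem stmt_9 (E : Type*) [Field E] (v : E → ℚ)
    (hv : ∀ x y : E, x ≠ 0 → y ≠ 0 → v (x * y) = v x + v y)
    (lam : E) (hlam : lam ≠ 0) (r s : ℤ) (hr : 0 < r) (hrs : r < s) :
    ¬ ∃ (L₁ L₂ : Submodule E (Fin 3 → E)), L₁ ≤ L₂ ∧
      Module.finrank E L₁ = 1 ∧ Module.finrank E L₂ = 2 ∧
      -- Hodge number = Newton number for the whole space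
      ((r : ℚ) * (Module.finrank E ↥((⊤ : Submodule E (Fin 3 → E)) ⊓ L₂) : ℕ) +
          ((s : ℚ) - (r : ℚ)) *
            (Module.finrank E ↥((⊤ : Submodule E (Fin 3 → E)) ⊓ L₁) : ℕ)
        = v (lam ^ Module.finrank E (Fin 3 → E))) ∧
      -- Hodge number ≤ Newton number for every φ-stable subspace
      (∀ D' : Submodule E (Fin 3 → E), (∀ x ∈ D', lam • x ∈ D') →
        (r : ℚ) * (Module.finrank E ↥(D' ⊓ L₂) : ℕ) +
            ((s : ℚ) - (r : ℚ)) * (Module.finrank E ↥(D' ⊓ L₁) : ℕ)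
          ≤ v (lam ^ Module.finrank E ↥D')) := by
  rintro ⟨L₁, L₂, h12, d1, d2, heq, hle⟩
  have htop : Module.finrank E (Fin 3 → E) = 3 := by
    simp [Module.finrank_fin_fun]
  rw [htop, vpow v hv lam hlam 3 (by norm_num)] at heq
  rw [top_inf_eq, top_inf_eq, d1, d2] at heq
  have h1 := hle L₁ (fun x hx => Submodule.smul_mem _ _ hx)
  rw [d1, inf_of_le_left h12, inf_idem, d1,
    vpow v hv lam hlam 1 (by norm_num)] at h1
  push_cast at heq h1
  have hrsq : (r : ℚ) < s := by exact_mod_cast hrs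
  have hrq : (0 : ℚ) < r := by exact_mod_cast hr
  linarith
end

section
/- Let E be a field of characteristic 0 (or with p ≠ 0 invertible and p ≠ 1), and let N be the nilpotent 3×3 matrix with N₃₁ = 1 and all other entries 0 (rank 1). Suppose φ is an invertible linear endomorphism of E³ satisfying Nφ = pφN and φ(e₃) = xe₃, φ(e₂) = ye₂ + we₃, φ(e₁) = pxe₁ + ue₂ + ve₃. Then there exists an invertible matrix P with PNP⁻¹ = N such that PφP⁻¹ is one of the five normal forms: diag(px, x, x); diag(px, x, x) + E₃₂; diag(px, px, x); diag(px, px, x) + E₂₁; diag(px, y, x) with px ≠ y ≠ x. -/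
set_option maxHeartbeats 2000000


open Matrix

private lemma conj_aux {E : Type*} [Field E] {P A B : Matrix (Fin 3) (Fin 3) E}
    (h : IsUnit P.det) (hc : P * A = B * P) : P * A * P⁻¹ = B := by
  rw [hc, Matrix.mul_assoc, Matrix.mul_nonsing_inv _ h, Matrix.mul_one]

theorem stmt_10 (E : Type*) [Field E] (p x y u v w : E)
    (hp0 : p ≠ 0) (hp1 : p ≠ 1) (hp2 : p ^ 2 ≠ 1) (hx : x ≠ 0) (hy : y ≠ 0) :
    ∃ P : Matrix (Fin 3) (Fin 3) E, IsUnit P.det ∧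
      P * !![0, 0, 0; 0, 0, 0; 1, 0, 0] * P⁻¹ = !![0, 0, 0; 0, 0, 0; 1, 0, 0] ∧
      (P * !![p * x, 0, 0; u, y, 0; v, w, x] * P⁻¹ = !![p * x, 0, 0; 0, x, 0; 0, 0, x] ∨
       P * !![p * x, 0, 0; u, y, 0; v, w, x] * P⁻¹ = !![p * x, 0, 0; 0, x, 0; 0, 1, x] ∨
       P * !![p * x, 0, 0; u, y, 0; v, w, x] * P⁻¹ = !![p * x, 0, 0; 0, p * x, 0; 0, 0, x] ∨
       P * !![p * x, 0, 0; u, y, 0; v, w, x] * P⁻¹ = !![p * x, 0, 0; 1, p * x, 0; 0, 0, x] ∨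
       (P * !![p * x, 0, 0; u, y, 0; v, w, x] * P⁻¹ = !![p * x, 0, 0; 0, y, 0; 0, 0, x] ∧
        p * x ≠ y ∧ y ≠ x)) := by
  have hpx : p * x - x ≠ 0 := by
    intro h
    exact hp1 (mul_right_cancel₀ hx (by rw [one_mul]; exact sub_eq_zero.mp h))
  rcases eq_or_ne y x with hyx | hyx
  · subst hyx
    rcases eq_or_ne w 0 with hw | hw
    · subst hw
      refine ⟨!![1, 0, 0; -u / (p * y - y), 1, 0; -v / (p * y - y), 0, 1], ?_, ?_, Or.inl ?_⟩
      · simp [Matrix.det_fin_three]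
      · apply conj_aux
        · simp [Matrix.det_fin_three]
        · ext i j
          fin_cases i <;> fin_cases j <;>
            (try simp [Matrix.mul_apply, Fin.sum_univ_three]) <;> (try field_simp) <;> try ring
      · apply conj_aux
        · simp [Matrix.det_fin_three]
        · ext i j
          fin_cases i <;> fin_cases j <;>
            (try simp [Matrix.mul_apply, Fin.sum_univ_three]) <;> (try field_simp) <;> try ring
    · refine ⟨!![1, 0, 0; -w * u / (p * y - y), w, 0;
          (-w * u / (p * y - y) - v) / (p * y - y), 0, 1], ?_, ?_, Or.inr (Or.inl ?_)⟩
      · simp [Matrix.det_fin_three, hw]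
      · apply conj_aux
        · simp [Matrix.det_fin_three, hw]
        · ext i j
          fin_cases i <;> fin_cases j <;>
            (try simp [Matrix.mul_apply, Fin.sum_univ_three]) <;> (try field_simp) <;> try ring
      · apply conj_aux
        · simp [Matrix.det_fin_three, hw]
        · ext i j
          fin_cases i <;> fin_cases j <;>
            (try simp [Matrix.mul_apply, Fin.sum_univ_three]) <;> (try field_simp) <;> try ring
  · rcases eq_or_ne y (p * x) with hypx | hypx
    · subst hypx
      rcases eq_or_ne u 0 with hu | hu
      · subst hu
        refine ⟨!![1, 0, 0; 0, 1, 0; -v / (p * x - x), -w / (p * x - x), 1], ?_, ?_,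
          Or.inr (Or.inr (Or.inl ?_))⟩
        · simp [Matrix.det_fin_three]
        · apply conj_aux
          · simp [Matrix.det_fin_three]
          · ext i j
            fin_cases i <;> fin_cases j <;>
              (try simp [Matrix.mul_apply, Fin.sum_univ_three]) <;> (try field_simp) <;> try ring
        · apply conj_aux
          · simp [Matrix.det_fin_three]
          · ext i j
            fin_cases i <;> fin_cases j <;>
              (try simp [Matrix.mul_apply, Fin.sum_univ_three]) <;> (try field_simp) <;> try ring
      · refine ⟨!![u, 0, 0;
            0, 1, 0;
            (u * w / (p * x - x) * u - u * v) / (p * x - x), -u * w / (p * x - x), u],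
            ?_, ?_, Or.inr (Or.inr (Or.inr (Or.inl ?_)))⟩
        · simp [Matrix.det_fin_three, hu]
        · apply conj_aux
          · simp [Matrix.det_fin_three, hu]
          · ext i j
            fin_cases i <;> fin_cases j <;>
              (try simp [Matrix.mul_apply, Fin.sum_univ_three]) <;> (try field_simp) <;> try ring
        · apply conj_aux
          · simp [Matrix.det_fin_three, hu]
          · ext i j
            fin_cases i <;> fin_cases j <;>
              (try simp [Matrix.mul_apply, Fin.sum_univ_three]) <;> (try field_simp) <;> try ring
    · have h1 : p * x - y ≠ 0 := fun h => hypx (by linear_combination -h)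
      have h2 : y - x ≠ 0 := sub_ne_zero.mpr hyx
      refine ⟨!![1, 0, 0;
          -u / (p * x - y), 1, 0;
          (w * u / (y - x) - v) / (p * x - x), -w / (y - x), 1],
          ?_, ?_, Or.inr (Or.inr (Or.inr (Or.inr ⟨?_, fun h => hypx h.symm, hyx⟩)))⟩
      · simp [Matrix.det_fin_three]
      · apply conj_aux
        · simp [Matrix.det_fin_three]
        · ext i j
          fin_cases i <;> fin_cases j <;>
            (try simp [Matrix.mul_apply, Fin.sum_univ_three]) <;> (try field_simp) <;> try ring
      · apply conj_aux
        · simp [Matrix.det_fin_three]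
        · ext i j
          fin_cases i <;> fin_cases j <;>
            (try simp [Matrix.mul_apply, Fin.sum_univ_three]) <;> (try field_simp) <;> try ring
end

section
/- Let E be a field, p ∈ E with p ≠ 1, λ ∈ E nonzero, N the matrix with N₃₁ = 1 (else 0), and φ = diag(pλ, λ, λ) + E₃₂. A 3×3 matrix P satisfies Pφ = φP and PN = NP if and only if P is lower triangular with P₁₁ = P₂₂ = P₃₃ and P₂₁ = P₃₁ = 0. -/
open Matrix

theorem stmt_12 (E : Type*) [Field E] (p l : E) (hp : p ≠ 1) (hl : l ≠ 0)
    (P : Matrix (Fin 3) (Fin 3) E) :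
    (P * !![p * l, 0, 0; 0, l, 0; 0, 1, l] = !![p * l, 0, 0; 0, l, 0; 0, 1, l] * P ∧
     P * !![0, 0, 0; 0, 0, 0; 1, 0, 0] = !![0, 0, 0; 0, 0, 0; 1, 0, 0] * P) ↔
      (P 0 1 = 0 ∧ P 0 2 = 0 ∧ P 1 2 = 0 ∧
       P 0 0 = P 1 1 ∧ P 1 1 = P 2 2 ∧ P 1 0 = 0 ∧ P 2 0 = 0) := by
  have hpl : p * l - l ≠ 0 := by
    intro h
    rcases mul_eq_zero.mp (show (p - 1) * l = 0 by linear_combination h) with h' | h'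
    · exact hp (by linear_combination h')
    · exact hl h'
  constructor
  · rintro ⟨h1, h2⟩
    have n00 := congrFun (congrFun h2 0) 0
    have n10 := congrFun (congrFun h2 1) 0
    have n20 := congrFun (congrFun h2 2) 0
    have n21 := congrFun (congrFun h2 2) 1
    have f10 := congrFun (congrFun h1 1) 0
    have f20 := congrFun (congrFun h1 2) 0
    have f21 := congrFun (congrFun h1 2) 1
    simp [Matrix.mul_apply, Fin.sum_univ_three, Matrix.vecHead, Matrix.vecTail] at n00 n10 n20 n21 f10 f20 f21
    have h10 : P 1 0 = 0 := by
      rcases mul_eq_zero.mp (show P 1 0 * (p * l - l) = 0 by linear_combination f10) with h | h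
      · exact h
      · exact absurd h hpl
    have h20 : P 2 0 = 0 := by
      rcases mul_eq_zero.mp (show P 2 0 * (p * l - l) = 0 by
          linear_combination f20 + h10) with h | h
      · exact h
      · exact absurd h hpl
    exact ⟨n21.symm, n00, n10, by linear_combination f21 - n20, by linear_combination -f21, h10, h20⟩
  · rintro ⟨h01, h02, h12, hd1, hd2, h10, h20⟩
    constructor <;> ext i j <;> fin_cases i <;> fin_cases j <;>
      simp [Matrix.mul_apply, Fin.sum_univ_three, Matrix.vecHead, Matrix.vecTail,
        h01, h02, h12, h10, h20, hd1, hd2] <;> ring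
end

section
/- Let E be a field, p ∈ E with p ∉ {0,1}, λ, μ ∈ E with λ ≠ μ ≠ pλ and λ ≠ 0, N the matrix with N₃₁ = 1 (else 0), and φ = diag(pλ, μ, λ). A 3×3 matrix P satisfies Pφ = φP and PN = NP if and only if P is diagonal with P₁₁ = P₃₃. -/
open Matrix

theorem stmt_13 (E : Type*) [Field E] (p l m : E)
    (hp0 : p ≠ 0) (hp1 : p ≠ 1) (hl : l ≠ 0) (hm1 : m ≠ l) (hm2 : m ≠ p * l)
    (P : Matrix (Fin 3) (Fin 3) E) :
    (P * !![p * l, 0, 0; 0, m, 0; 0, 0, l] = !![p * l, 0, 0; 0, m, 0; 0, 0, l] * P ∧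
     P * !![0, 0, 0; 0, 0, 0; 1, 0, 0] = !![0, 0, 0; 0, 0, 0; 1, 0, 0] * P) ↔
      ((∀ i j : Fin 3, i ≠ j → P i j = 0) ∧ P 0 0 = P 2 2) := by
  constructor
  · rintro ⟨h1, h2⟩
    rw [← Matrix.ext_iff] at h1 h2
    have e10 := h1 1 0; have e20 := h1 2 0; have e21 := h1 2 1
    have f00 := h2 0 0; have f10 := h2 1 0; have f20 := h2 2 0; have f21 := h2 2 1
    simp [Matrix.mul_apply, Fin.sum_univ_three, Matrix.vecHead, Matrix.vecTail] at e10 e20 e21 f00 f10 f20 f21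
    clear h1 h2
    have p10 : P 1 0 = 0 := by
      have : P 1 0 * (p * l - m) = 0 := by linear_combination e10
      rcases mul_eq_zero.1 this with h | h
      · exact h
      · exact absurd (sub_eq_zero.1 h).symm hm2
    have p20 : P 2 0 = 0 := by
      have : P 2 0 * (l * (p - 1)) = 0 := by linear_combination e20
      rcases mul_eq_zero.1 this with h | h
      · exact h
      · rcases mul_eq_zero.1 h with h' | h'
        · exact absurd h' hl
        · exact absurd (sub_eq_zero.1 h') hp1
    have p21 : P 2 1 = 0 := by
      have : P 2 1 * (m - l) = 0 := by linear_combination e21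
      rcases mul_eq_zero.1 this with h | h
      · exact h
      · exact absurd (sub_eq_zero.1 h) hm1
    refine ⟨fun i j hij => ?_, f20.symm⟩
    fin_cases i <;> fin_cases j <;> simp_all
  · rintro ⟨hd, he⟩
    have h01 := hd 0 1 (by decide); have h02 := hd 0 2 (by decide)
    have h10 := hd 1 0 (by decide); have h12 := hd 1 2 (by decide)
    have h20 := hd 2 0 (by decide); have h21 := hd 2 1 (by decide)
    constructor <;> ext i j <;> fin_cases i <;> fin_cases j <;>
      simp [Matrix.mul_apply, Fin.sum_univ_three, Matrix.vecHead, Matrix.vecTail, h01, h02, h10, h12, h20, h21, he] <;> ring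
end

section
/- Let E be a field, p ∈ E with p ∉ {0,1}, λ ∈ E nonzero, N the matrix with N₃₁ = 1 (else 0), and φ = diag(pλ, μ, λ) with μ ∉ {λ, pλ}. Then the only nontrivial proper subspaces of E³ invariant under both φ and N are span{e₂}, span{e₃}, span{e₂,e₃}, and span{e₁,e₃}. -/
open Matrix

section helpers
variable {E : Type*} [Field E]

lemma mulVecM (p l m : E) (x : Fin 3 → E) :
    (!![p * l, 0, 0; 0, m, 0; 0, 0, l]).mulVec x = ![p*l*x 0, m*x 1, l*x 2] := by
  funext i; fin_cases i <;> simp [Matrix.mulVec, dotProduct, Fin.sum_univ_three]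

lemma mulVecN (x : Fin 3 → E) :
    (!![0, 0, 0; 0, 0, 0; 1, 0, 0] : Matrix (Fin 3) (Fin 3) E).mulVec x = ![0,0,x 0] := by
  funext i; fin_cases i <;> simp [Matrix.mulVec, dotProduct, Fin.sum_univ_three]

lemma mem_span1 (x : Fin 3 → E) :
    x ∈ Submodule.span E {(Pi.single 1 1 : Fin 3 → E)} ↔ x 0 = 0 ∧ x 2 = 0 := by
  rw [Submodule.mem_span_singleton]
  constructor
  · rintro ⟨c, rfl⟩; simp
  · rintro ⟨h0, h2⟩
    exact ⟨x 1, by funext i; fin_cases i <;> simp [h0, h2]⟩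

lemma mem_span2 (x : Fin 3 → E) :
    x ∈ Submodule.span E {(Pi.single 2 1 : Fin 3 → E)} ↔ x 0 = 0 ∧ x 1 = 0 := by
  rw [Submodule.mem_span_singleton]
  constructor
  · rintro ⟨c, rfl⟩; simp
  · rintro ⟨h0, h1⟩
    exact ⟨x 2, by funext i; fin_cases i <;> simp [h0, h1]⟩

lemma mem_span12 (x : Fin 3 → E) :
    x ∈ Submodule.span E {(Pi.single 1 1 : Fin 3 → E), Pi.single 2 1} ↔ x 0 = 0 := by
  rw [Submodule.mem_span_pair]
  constructor
  · rintro ⟨a, b, rfl⟩; simp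
  · intro h0
    exact ⟨x 1, x 2, by funext i; fin_cases i <;> simp [h0]⟩

lemma mem_span02 (x : Fin 3 → E) :
    x ∈ Submodule.span E {(Pi.single 0 1 : Fin 3 → E), Pi.single 2 1} ↔ x 1 = 0 := by
  rw [Submodule.mem_span_pair]
  constructor
  · rintro ⟨a, b, rfl⟩; simp
  · intro h1
    exact ⟨x 0, x 2, by funext i; fin_cases i <;> simp [h1]⟩

lemma extract (p l m : E) (hp1 : p ≠ 1) (hl : l ≠ 0) (hm1 : m ≠ l) (hm2 : m ≠ p * l)
    (W : Submodule E (Fin 3 → E))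
    (hW : ∀ x ∈ W, (!![p * l, 0, 0; 0, m, 0; 0, 0, l]).mulVec x ∈ W)
    (x : Fin 3 → E) (hx : x ∈ W) :
    (x 0 ≠ 0 → (Pi.single 0 1 : Fin 3 → E) ∈ W) ∧
    (x 1 ≠ 0 → (Pi.single 1 1 : Fin 3 → E) ∈ W) ∧
    (x 2 ≠ 0 → (Pi.single 2 1 : Fin 3 → E) ∈ W) := by
  set M : Matrix (Fin 3) (Fin 3) E := !![p * l, 0, 0; 0, m, 0; 0, 0, l] with hM
  have hpl : p * l - l ≠ 0 := by
    have : (p - 1) * l ≠ 0 := mul_ne_zero (sub_ne_zero.mpr hp1) hl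
    rwa [sub_mul, one_mul] at this
  have hplm : p * l - m ≠ 0 := sub_ne_zero.mpr fun h => hm2 h.symm
  have hml : m - l ≠ 0 := sub_ne_zero.mpr hm1
  have hmpl : m - p * l ≠ 0 := sub_ne_zero.mpr hm2
  have hlpl : l - p * l ≠ 0 := fun h => hpl (by linear_combination -h)
  have hlm : l - m ≠ 0 := fun h => hml (by linear_combination -h)
  have combo : ∀ a b : E, M.mulVec (M.mulVec x) + a • M.mulVec x + b • x ∈ W :=
    fun a b => W.add_mem (W.add_mem (hW _ (hW _ hx)) (W.smul_mem a (hW _ hx)))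
      (W.smul_mem b hx)
  refine ⟨fun h0 => ?_, fun h1 => ?_, fun h2 => ?_⟩
  · have hc := combo (-(l+m)) (l*m)
    have he : M.mulVec (M.mulVec x) + (-(l+m)) • M.mulVec x + (l*m) • x
        = ((p*l-l)*(p*l-m)*x 0) • (Pi.single 0 1 : Fin 3 → E) := by
      rw [hM, mulVecM, mulVecM]
      funext i; fin_cases i <;> simp <;> ring
    rw [he] at hc
    have hne : (p*l-l)*(p*l-m)*x 0 ≠ 0 := mul_ne_zero (mul_ne_zero hpl hplm) h0
    have := W.smul_mem ((p*l-l)*(p*l-m)*x 0)⁻¹ hc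
    rwa [smul_smul, inv_mul_cancel₀ hne, one_smul] at this
  · have hc := combo (-(p*l+l)) (p*l*l)
    have he : M.mulVec (M.mulVec x) + (-(p*l+l)) • M.mulVec x + (p*l*l) • x
        = ((m-p*l)*(m-l)*x 1) • (Pi.single 1 1 : Fin 3 → E) := by
      rw [hM, mulVecM, mulVecM]
      funext i; fin_cases i <;> simp <;> ring
    rw [he] at hc
    have hne : (m-p*l)*(m-l)*x 1 ≠ 0 := mul_ne_zero (mul_ne_zero hmpl hml) h1
    have := W.smul_mem ((m-p*l)*(m-l)*x 1)⁻¹ hc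
    rwa [smul_smul, inv_mul_cancel₀ hne, one_smul] at this
  · have hc := combo (-(p*l+m)) (p*l*m)
    have he : M.mulVec (M.mulVec x) + (-(p*l+m)) • M.mulVec x + (p*l*m) • x
        = ((l-p*l)*(l-m)*x 2) • (Pi.single 2 1 : Fin 3 → E) := by
      rw [hM, mulVecM, mulVecM]
      funext i; fin_cases i <;> simp <;> ring
    rw [he] at hc
    have hne : (l-p*l)*(l-m)*x 2 ≠ 0 := mul_ne_zero (mul_ne_zero hlpl hlm) h2
    have := W.smul_mem ((l-p*l)*(l-m)*x 2)⁻¹ hc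
    rwa [smul_smul, inv_mul_cancel₀ hne, one_smul] at this

set_option synthInstance.maxHeartbeats 1000000 in
lemma triple_decomp (x : Fin 3 → E) :
    x = x 0 • (Pi.single 0 1 : Fin 3 → E) + x 1 • (Pi.single 1 1 : Fin 3 → E)
      + x 2 • (Pi.single 2 1 : Fin 3 → E) := by
  funext i; fin_cases i <;> simp

end helpers

theorem stmt_14 (E : Type*) [Field E] (p l m : E)
    (hp0 : p ≠ 0) (hp1 : p ≠ 1) (hl : l ≠ 0) (hm1 : m ≠ l) (hm2 : m ≠ p * l)
    (W : Submodule E (Fin 3 → E)) :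
    (W ≠ ⊥ ∧ W ≠ ⊤ ∧
      (∀ x ∈ W, (!![p * l, 0, 0; 0, m, 0; 0, 0, l]).mulVec x ∈ W) ∧
      (∀ x ∈ W, (!![0, 0, 0; 0, 0, 0; 1, 0, 0] : Matrix (Fin 3) (Fin 3) E).mulVec x ∈ W)) ↔
      (W = Submodule.span E {(Pi.single 1 1 : Fin 3 → E)} ∨
       W = Submodule.span E {(Pi.single 2 1 : Fin 3 → E)} ∨
       W = Submodule.span E {(Pi.single 1 1 : Fin 3 → E), Pi.single 2 1} ∨
       W = Submodule.span E {(Pi.single 0 1 : Fin 3 → E), Pi.single 2 1}) := by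
  constructor
  · rintro ⟨hbot, htop, hphi, hN⟩
    have ext0 : ∀ x ∈ W, x 0 ≠ 0 → (Pi.single 0 1 : Fin 3 → E) ∈ W :=
      fun x hx => (extract p l m hp1 hl hm1 hm2 W hphi x hx).1
    have ext1 : ∀ x ∈ W, x 1 ≠ 0 → (Pi.single 1 1 : Fin 3 → E) ∈ W :=
      fun x hx => (extract p l m hp1 hl hm1 hm2 W hphi x hx).2.1
    have ext2 : ∀ x ∈ W, x 2 ≠ 0 → (Pi.single 2 1 : Fin 3 → E) ∈ W :=
      fun x hx => (extract p l m hp1 hl hm1 hm2 W hphi x hx).2.2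
    by_cases he0 : (Pi.single 0 1 : Fin 3 → E) ∈ W
    · -- then e3 ∈ W via N, e2 ∉ W (else ⊤), so W = span{e0, e2}
      have he2 : (Pi.single 2 1 : Fin 3 → E) ∈ W := by
        have := hN _ he0
        rw [mulVecN] at this
        convert this using 1
        funext i; fin_cases i <;> simp
      have he1 : (Pi.single 1 1 : Fin 3 → E) ∉ W := by
        intro h
        apply htop
        rw [Submodule.eq_top_iff']
        intro x
        rw [triple_decomp x]
        exact W.add_mem (W.add_mem (W.smul_mem _ he0) (W.smul_mem _ h)) (W.smul_mem _ he2)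
      refine Or.inr (Or.inr (Or.inr ?_))
      ext x
      rw [mem_span02]
      constructor
      · intro hx
        by_contra h1
        exact he1 (ext1 x hx h1)
      · intro h1
        rw [triple_decomp x, h1, zero_smul, add_zero]
        exact W.add_mem (W.smul_mem _ he0) (W.smul_mem _ he2)
    · have h0z : ∀ x ∈ W, x 0 = 0 := by
        intro x hx
        by_contra h
        exact he0 (ext0 x hx h)
      by_cases he1 : (Pi.single 1 1 : Fin 3 → E) ∈ W
      · by_cases he2 : (Pi.single 2 1 : Fin 3 → E) ∈ W
        · refine Or.inr (Or.inr (Or.inl ?_))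
          ext x
          rw [mem_span12]
          constructor
          · exact h0z x
          · intro h0
            rw [triple_decomp x, h0, zero_smul, zero_add]
            exact W.add_mem (W.smul_mem _ he1) (W.smul_mem _ he2)
        · refine Or.inl ?_
          ext x
          rw [mem_span1]
          constructor
          · intro hx
            refine ⟨h0z x hx, ?_⟩
            by_contra h2
            exact he2 (ext2 x hx h2)
          · rintro ⟨h0, h2⟩
            rw [triple_decomp x, h0, h2, zero_smul, zero_smul, zero_add, add_zero]
            exact W.smul_mem _ he1
      · by_cases he2 : (Pi.single 2 1 : Fin 3 → E) ∈ W
        · refine Or.inr (Or.inl ?_)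
          ext x
          rw [mem_span2]
          constructor
          · intro hx
            refine ⟨h0z x hx, ?_⟩
            by_contra h1
            exact he1 (ext1 x hx h1)
          · rintro ⟨h0, h1⟩
            rw [triple_decomp x, h0, h1, zero_smul, zero_smul, zero_add, zero_add]
            exact W.smul_mem _ he2
        · exfalso
          apply hbot
          rw [Submodule.eq_bot_iff]
          intro x hx
          have h0 : x 0 = 0 := h0z x hx
          have h1 : x 1 = 0 := by by_contra h; exact he1 (ext1 x hx h)
          have h2 : x 2 = 0 := by by_contra h; exact he2 (ext2 x hx h)
          funext i; fin_cases i <;> simp [h0, h1, h2]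
  · have hone : (1 : E) ≠ 0 := one_ne_zero
    rintro (rfl | rfl | rfl | rfl)
    · refine ⟨?_, ?_, ?_, ?_⟩
      · intro h
        have := (Submodule.eq_bot_iff _).mp h _
          (Submodule.mem_span_singleton_self (Pi.single 1 1 : Fin 3 → E))
        exact hone (by simpa using congrFun this 1)
      · intro h
        have := (mem_span1 (Pi.single 0 1 : Fin 3 → E)).mp (h ▸ Submodule.mem_top)
        simpa using this.1
      · intro x hx
        rw [mem_span1] at hx ⊢
        rw [mulVecM]
        simp [hx.1, hx.2]
      · intro x hx
        rw [mem_span1] at hx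
        rw [mem_span1, mulVecN]
        simp [hx.1]
    · refine ⟨?_, ?_, ?_, ?_⟩
      · intro h
        have := (Submodule.eq_bot_iff _).mp h _
          (Submodule.mem_span_singleton_self (Pi.single 2 1 : Fin 3 → E))
        exact hone (by simpa using congrFun this 2)
      · intro h
        have := (mem_span2 (Pi.single 0 1 : Fin 3 → E)).mp (h ▸ Submodule.mem_top)
        simpa using this.1
      · intro x hx
        rw [mem_span2] at hx ⊢
        rw [mulVecM]
        simp [hx.1, hx.2]
      · intro x hx
        rw [mem_span2] at hx
        rw [mem_span2, mulVecN]
        simp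
    · refine ⟨?_, ?_, ?_, ?_⟩
      · intro h
        have : (Pi.single 1 1 : Fin 3 → E) ∈ (⊥ : Submodule E (Fin 3 → E)) :=
          h ▸ Submodule.subset_span (Set.mem_insert _ _)
        rw [Submodule.mem_bot] at this
        exact hone (by simpa using congrFun this 1)
      · intro h
        have := (mem_span12 (Pi.single 0 1 : Fin 3 → E)).mp (h ▸ Submodule.mem_top)
        simpa using this
      · intro x hx
        rw [mem_span12] at hx ⊢
        rw [mulVecM]
        simp [hx]
      · intro x hx
        rw [mem_span12] at hx
        rw [mem_span12, mulVecN]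
        simp
    · refine ⟨?_, ?_, ?_, ?_⟩
      · intro h
        have : (Pi.single 0 1 : Fin 3 → E) ∈ (⊥ : Submodule E (Fin 3 → E)) :=
          h ▸ Submodule.subset_span (Set.mem_insert _ _)
        rw [Submodule.mem_bot] at this
        exact hone (by simpa using congrFun this 0)
      · intro h
        have := (mem_span02 (Pi.single 1 1 : Fin 3 → E)).mp (h ▸ Submodule.mem_top)
        simpa using this
      · intro x hx
        rw [mem_span02] at hx ⊢
        rw [mulVecM]
        simp [hx]
      · intro x hx
        rw [mem_span02] at hx
        rw [mem_span02, mulVecN]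
        simp
end

section
/- Let E be a field with an element p such that p ∉ {0,1,−1} (so that 1−p and 1−p² are invertible), and let N be the 3×3 nilpotent matrix with N₂₁ = N₃₂ = 1 and all other entries 0 (rank 2). Suppose φ is an invertible endomorphism of E³ satisfying Nφ = pφN, so that φ(e₁) = p²xe₁ + pye₂ + ze₃, φ(e₂) = pxe₂ + ye₃, φ(e₃) = xe₃ for some x ≠ 0 and y, z ∈ E. Then there exists an invertible matrix P with PNP⁻¹ = N and PφP⁻¹ = diag(p²x, px, x). -/
open Matrix

theorem stmt_15 (E : Type*) [Field E] (p x y z : E)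
    (h1 : 1 - p ≠ 0) (h2 : 1 - p ^ 2 ≠ 0) (hx : x ≠ 0) :
    ∃ P : Matrix (Fin 3) (Fin 3) E, IsUnit P.det ∧
      P * !![0, 0, 0; 1, 0, 0; 0, 1, 0] * P⁻¹ = !![0, 0, 0; 1, 0, 0; 0, 1, 0] ∧
      P * !![p ^ 2 * x, 0, 0; p * y, p * x, 0; z, y, x] * P⁻¹ =
        !![p ^ 2 * x, 0, 0; 0, p * x, 0; 0, 0, x] := by
  obtain ⟨a, hax⟩ : ∃ a : E, a * (x * (1 - p)) = y :=
    ⟨y / (x * (1 - p)), by field_simp⟩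
  obtain ⟨b, hbx⟩ : ∃ b : E, b * (x * (1 - p ^ 2)) = p * y * a + z :=
    ⟨(p * y * a + z) / (x * (1 - p ^ 2)), by field_simp⟩
  have hinv : (!![1,0,0; a,1,0; b,a,1] : Matrix (Fin 3) (Fin 3) E)⁻¹ =
      !![1,0,0; -a,1,0; a*a-b,-a,1] := by
    apply Matrix.inv_eq_right_inv
    ext i j
    fin_cases i <;> fin_cases j <;>
      simp [Matrix.mul_apply, Fin.sum_univ_three, Matrix.one_apply,
        Matrix.vecHead, Matrix.vecTail] <;> ring
  refine ⟨!![1,0,0; a,1,0; b,a,1], ?_, ?_, ?_⟩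
  · simp [Matrix.det_fin_three]
  · rw [hinv]
    ext i j
    fin_cases i <;> fin_cases j <;>
      simp [Matrix.mul_apply, Fin.sum_univ_three, Matrix.vecHead, Matrix.vecTail]
  · rw [hinv]
    ext i j
    fin_cases i <;> fin_cases j <;>
      simp [Matrix.mul_apply, Fin.sum_univ_three, Matrix.vecHead, Matrix.vecTail]
    · linear_combination (-p) * hax
    · linear_combination a * hax - hbx
    · linear_combination -hax
end
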